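/- There is a bijection between the set H(m,n;k) of (m,n) hook-shape partitions of k and the set of pairs (mu, nu) of partitions with mu a partition of s, nu a partition of t, s + t = k, ell(mu) <= m, ell(nu) <= n, and mu_m >= ell(nu); the bijection sends lambda to (lambda^1, lambda^2), where lambda^1 = (lambda_1, ..., lambda_m) and lambda^2_j = max(lambda*_j - m, 0) for j = 1, ..., n, with lambda* the conjugate partition. -/

import Mathlib

/-- `f : ℕ → ℕ` (0-indexed parts) is a partition of `s`: weakly decreasing, with
all parts beyond the `s`-th equal to zero, summing to `s`. -/
def IsPartitionOf (f : ℕ → ℕ) (s : ℕ) : Prop :=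
  Antitone f ∧ (∀ i, s ≤ i → f i = 0) ∧ ∑ i ∈ Finset.range s, f i = s

/-- The number of nonzero parts of `f` (computed within the first `k` parts). -/
def plen (k : ℕ) (f : ℕ → ℕ) : ℕ :=
  ((Finset.range k).filter (fun i => f i ≠ 0)).card

/-- The conjugate partition: `pconj k f j` is the number of boxes in the `j`-th
(0-indexed) column of the Young diagram of `f`. -/
def pconj (k : ℕ) (f : ℕ → ℕ) (j : ℕ) : ℕ :=
  ((Finset.range k).filter (fun i => j < f i)).card

/-!
Cut `λ` below its `m`-th row. The rows `λ_{m+1}, λ_{m+2}, …` below the cut form a partition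
whose conjugate has parts `λ*_j - m`, i.e. it is `λ²`; by the hook condition these parts
vanish for `j ≥ n`. Conjugation is a size-preserving involution, so `λ` is recovered by
stacking the conjugate of `λ²` under `λ¹`. The length of `λ²` is the first row below the cut,
`λ_{m+1} ≤ n`, and `μ_m ≥ ℓ(ν)` is exactly what makes the stacked sequence weakly decreasing.
-/

open Finset

variable {k s : ℕ} {f : ℕ → ℕ}

lemma sum_range_eq_of_eq_zero {a b : ℕ} (h0 : ∀ i, a ≤ i → f i = 0) (hab : a ≤ b) :
    ∑ i ∈ range b, f i = ∑ i ∈ range a, f i := by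
  rw [← sum_range_add_sum_Ico f hab, sum_eq_zero fun i hi => h0 i (mem_Ico.1 hi).1, add_zero]

namespace IsPartitionOf

lemma apply_le (hp : IsPartitionOf f s) (i : ℕ) : f i ≤ s := by
  rcases le_or_gt s i with hsi | his
  · simp [hp.2.1 i hsi]
  · calc f i ≤ ∑ i ∈ range s, f i := single_le_sum (fun _ _ => Nat.zero_le _) (mem_range.2 his)
      _ = s := hp.2.2

lemma sum_range {K : ℕ} (hp : IsPartitionOf f s) (hK : ∀ i, K ≤ i → f i = 0) :
    ∑ i ∈ range K, f i = s := by
  rw [← sum_range_eq_of_eq_zero hK (Nat.le_add_right K s),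
    sum_range_eq_of_eq_zero hp.2.1 (Nat.le_add_left s K), hp.2.2]

lemma eq_zero_of_le {K : ℕ} (hp : IsPartitionOf f s) (hsK : s ≤ K) : ∀ i, K ≤ i → f i = 0 :=
  fun i hi => hp.2.1 i (hsK.trans hi)

end IsPartitionOf

lemma isPartitionOf_of_sum_range {K : ℕ} (hf : Antitone f) (hK : ∀ i, K ≤ i → f i = 0) :
    IsPartitionOf f (∑ i ∈ range K, f i) := by
  set t := ∑ i ∈ range K, f i
  have ht : ∀ i, t ≤ i → f i = 0 := by
    intro i hti
    by_contra hne
    have hiK : i < K := by by_contra h; exact hne (hK i (not_lt.1 h))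
    have hpos : ∀ j ∈ range (i + 1), 1 ≤ f j := fun j hj =>
      (Nat.one_le_iff_ne_zero.2 hne).trans (hf (Nat.lt_succ_iff.1 (mem_range.1 hj)))
    have : i + 1 ≤ t := calc
      i + 1 = ∑ _j ∈ range (i + 1), 1 := by simp
      _ ≤ ∑ j ∈ range (i + 1), f j := sum_le_sum hpos
      _ ≤ t := sum_le_sum_of_subset (range_subset_range.2 hiK)
    omega
  refine ⟨hf, ht, ?_⟩
  rw [← sum_range_eq_of_eq_zero ht (Nat.le_add_right t K),
    sum_range_eq_of_eq_zero hK (Nat.le_add_left K t)]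

section Conjugate

lemma pconj_antitone (k : ℕ) (f : ℕ → ℕ) : Antitone (pconj k f) := fun _ _ hj =>
  card_le_card (monotone_filter_right _ fun _ _ h => lt_of_le_of_lt hj h)

lemma pconj_zero (k : ℕ) (f : ℕ → ℕ) : pconj k f 0 = plen k f := by
  simp only [pconj, plen, Nat.pos_iff_ne_zero]

lemma lt_pconj_iff (hf : Antitone f) (hk : ∀ i, k ≤ i → f i = 0) (i j : ℕ) :
    i < pconj k f j ↔ j < f i := by
  have hrow : j < f i → i < k := fun h => by
    by_contra hik; rw [hk i (not_lt.1 hik)] at h; exact Nat.not_lt_zero j h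
  constructor
  · intro h
    by_contra hc
    have hsub : (range k).filter (fun i' => j < f i') ⊆ range i := fun x hx => by
      simp only [mem_filter, mem_range] at hx ⊢
      by_contra hxi
      exact hc (lt_of_lt_of_le hx.2 (hf (not_lt.1 hxi)))
    exact absurd (card_le_card hsub) (by simpa [pconj] using h)
  · intro h
    have hsub : range (i + 1) ⊆ (range k).filter (fun i' => j < f i') := fun x hx => by
      have hxi := Nat.lt_succ_iff.1 (mem_range.1 hx)
      simp only [mem_filter, mem_range]
      exact ⟨lt_of_le_of_lt hxi (hrow h), lt_of_lt_of_le h (hf hxi)⟩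
    simpa [pconj] using card_le_card hsub

lemma pconj_le_iff (hf : Antitone f) (hk : ∀ i, k ≤ i → f i = 0) (i j : ℕ) :
    pconj k f j ≤ i ↔ f i ≤ j :=
  not_iff_not.1 (by simpa only [not_le] using lt_pconj_iff hf hk i j)

lemma pconj_eq_zero (hf : Antitone f) (hk : ∀ i, k ≤ i → f i = 0) {j : ℕ} (hj : f 0 ≤ j) :
    pconj k f j = 0 :=
  Nat.le_zero.1 ((pconj_le_iff hf hk 0 j).2 hj)

lemma plen_le_iff (hf : Antitone f) (hk : ∀ i, k ≤ i → f i = 0) (m : ℕ) :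
    plen k f ≤ m ↔ f m = 0 := by
  rw [← pconj_zero, pconj_le_iff hf hk, Nat.le_zero]

lemma eq_zero_of_plen_le (hf : Antitone f) (hk : ∀ i, k ≤ i → f i = 0) {m : ℕ}
    (hlen : plen k f ≤ m) : ∀ i, m ≤ i → f i = 0 :=
  fun _ hi => Nat.le_zero.1 (((plen_le_iff hf hk m).1 hlen) ▸ hf hi)

lemma pconj_pconj (hf : Antitone f) (hk : ∀ i, k ≤ i → f i = 0) (hf0 : f 0 ≤ k) :
    pconj k (pconj k f) = f := by
  have hk' : ∀ j, k ≤ j → pconj k f j = 0 := fun j hj => pconj_eq_zero hf hk (hf0.trans hj)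
  funext j
  exact eq_of_forall_lt_iff fun i => by
    rw [lt_pconj_iff (pconj_antitone k f) hk', lt_pconj_iff hf hk]

/-- Double counting of the boxes of the Young diagram by rows and by columns. -/
lemma sum_pconj (hfk : ∀ i, f i ≤ k) : ∑ j ∈ range k, pconj k f j = ∑ i ∈ range k, f i := by
  simp only [pconj, card_filter]
  rw [sum_comm]
  refine sum_congr rfl fun i _ => ?_
  rw [← card_filter, show (range k).filter (· < f i) = range (f i) by
    ext x; simp only [mem_filter, mem_range]; have := hfk i; omega, card_range]

lemma antitone_shift (hf : Antitone f) (m : ℕ) : Antitone fun d => f (m + d) :=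
  fun _ _ h => hf (Nat.add_le_add_left h m)

lemma shift_eq_zero (hk : ∀ i, k ≤ i → f i = 0) (m : ℕ) : ∀ d, k ≤ d → f (m + d) = 0 :=
  fun d hd => hk _ (hd.trans (Nat.le_add_left d m))

lemma pconj_shift (hf : Antitone f) (hk : ∀ i, k ≤ i → f i = 0) (m : ℕ) :
    pconj k (fun d => f (m + d)) = fun j => pconj k f j - m := by
  funext j
  exact eq_of_forall_lt_iff fun d => by
    rw [lt_pconj_iff (antitone_shift hf m) (shift_eq_zero hk m), ← lt_pconj_iff hf hk]; omega

end Conjugate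

section Stack

def stack (m : ℕ) (μ g : ℕ → ℕ) (i : ℕ) : ℕ := if i < m then μ i else g (i - m)

variable {m : ℕ} {μ g : ℕ → ℕ}

lemma stack_antitone (hμ : Antitone μ) (hg : Antitone g) (hjoin : ∀ i < m, g 0 ≤ μ i) :
    Antitone (stack m μ g) := by
  intro i i' hii'
  unfold stack
  split_ifs
  · exact hμ hii'
  · omega
  · exact (hg (Nat.zero_le _)).trans (hjoin i ‹_›)
  · exact hg (Nat.sub_le_sub_right hii' m)

lemma sum_range_stack (K : ℕ) :
    ∑ i ∈ range (m + K), stack m μ g i = ∑ i ∈ range m, μ i + ∑ i ∈ range K, g i := by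
  rw [sum_range_add]
  congr 1
  · exact sum_congr rfl fun i hi => if_pos (mem_range.1 hi)
  · simp [stack]

lemma stack_shift : (fun d => stack m μ g (m + d)) = g := by
  funext d; simp [stack]

lemma truncate_stack (hμ : ∀ i, m ≤ i → μ i = 0) :
    (fun i => if i < m then stack m μ g i else 0) = μ := by
  funext i
  by_cases hi : i < m
  · simp [stack, hi]
  · simp [hi, hμ i (not_lt.1 hi)]

lemma stack_truncate_shift (f : ℕ → ℕ) :
    stack m (fun i => if i < m then f i else 0) (fun d => f (m + d)) = f := by
  funext i
  by_cases hi : i < m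
  · simp [stack, hi]
  · simp [stack, hi, Nat.add_sub_cancel' (not_lt.1 hi)]

end Stack

section Hook

variable {m n : ℕ}

lemma ite_pconj_sub_eq_pconj_shift (hp : IsPartitionOf f k) (hook : f m ≤ n) :
    (fun j => if j < n then pconj k f j - m else 0) = pconj k (fun d => f (m + d)) := by
  rw [pconj_shift hp.1 hp.2.1]
  funext j
  split_ifs with hj
  · rfl
  · have := (pconj_le_iff hp.1 hp.2.1 m j).2 (hook.trans (not_lt.1 hj))
    omega

lemma exists_partitions_of_hook (hm : 0 < m) (hp : IsPartitionOf f k) (hook : f m ≤ n) :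
    ∃ s t : ℕ, s + t = k ∧
      IsPartitionOf (fun i => if i < m then f i else 0) s ∧
      IsPartitionOf (fun j => if j < n then pconj k f j - m else 0) t ∧
      plen k (fun i => if i < m then f i else 0) ≤ m ∧
      plen k (fun j => if j < n then pconj k f j - m else 0) ≤ n ∧
      plen k (fun j => if j < n then pconj k f j - m else 0) ≤
        if m - 1 < m then f (m - 1) else 0 := by
  rw [ite_pconj_sub_eq_pconj_shift hp hook, if_pos (Nat.sub_lt hm one_pos)]
  set g := fun d => f (m + d)
  have hg := antitone_shift hp.1 m
  have hgk := shift_eq_zero hp.2.1 m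
  have hμ : Antitone fun i => if i < m then f i else 0 := fun i i' h => by
    dsimp only
    split_ifs <;> first | exact hp.1 h | omega
  have hμm : ∀ i, m ≤ i → (if i < m then f i else 0) = 0 := fun i hi => if_neg (not_lt.2 hi)
  have hμk : ∀ i, k ≤ i → (if i < m then f i else 0) = 0 := fun i hi => by simp [hp.2.1 i hi]
  have hν := isPartitionOf_of_sum_range (pconj_antitone k g)
    fun j hj => pconj_eq_zero hg hgk ((hp.apply_le m).trans hj)
  have hlen : plen k (pconj k g) = f m := by
    rw [← pconj_zero, pconj_pconj hg hgk (hp.apply_le m)]; rfl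
  refine ⟨_, _, ?_, isPartitionOf_of_sum_range hμ hμm, hν, (plen_le_iff hμ hμk m).2 (hμm m le_rfl),
    hlen ▸ hook, hlen ▸ hp.1 (Nat.sub_le m 1)⟩
  calc _ = ∑ i ∈ range m, f i + ∑ d ∈ range k, f (m + d) := by
        rw [sum_pconj fun d => hp.apply_le _]
        exact congrArg (· + _) (sum_congr rfl fun i hi => if_pos (mem_range.1 hi))
    _ = k := by rw [← sum_range_add, hp.sum_range (hp.eq_zero_of_le (Nat.le_add_left k m))]

lemma stack_pconj_isPartitionOf_and_le {μ ν : ℕ → ℕ} {s t : ℕ} (hst : s + t = k)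
    (hμ : IsPartitionOf μ s) (hν : IsPartitionOf ν t) (hlμ : plen k μ ≤ m) (hlν : plen k ν ≤ n)
    (hjoin : plen k ν ≤ μ (m - 1)) :
    IsPartitionOf (stack m μ (pconj k ν)) k ∧ stack m μ (pconj k ν) m ≤ n := by
  have hνk := hν.eq_zero_of_le (show t ≤ k by omega)
  have hμm := eq_zero_of_plen_le hμ.1 (hμ.eq_zero_of_le (show s ≤ k by omega)) hlμ
  have hanti := stack_antitone (m := m) hμ.1 (pconj_antitone k ν) fun i hi => by
    rw [pconj_zero]; exact hjoin.trans (hμ.1 (show i ≤ m - 1 by omega))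
  have hvan : ∀ i, m + k ≤ i → stack m μ (pconj k ν) i = 0 := fun i hi => by
    rw [stack, if_neg (by omega)]
    exact pconj_eq_zero hν.1 hνk ((hν.apply_le 0).trans (by omega))
  have hpart := isPartitionOf_of_sum_range hanti hvan
  rw [sum_range_stack, hμ.sum_range hμm, sum_pconj fun i => (hν.apply_le i).trans (by omega),
    hν.sum_range hνk, hst] at hpart
  refine ⟨hpart, ?_⟩
  simpa [stack, pconj_zero] using hlν

end Hook

def hookSplit (m n k : ℕ) (hm : 0 < m) :
    {f : ℕ → ℕ // IsPartitionOf f k ∧ f m ≤ n} ≃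
      {p : (ℕ → ℕ) × (ℕ → ℕ) // ∃ s t : ℕ, s + t = k ∧
        IsPartitionOf p.1 s ∧ IsPartitionOf p.2 t ∧
        plen k p.1 ≤ m ∧ plen k p.2 ≤ n ∧ plen k p.2 ≤ p.1 (m - 1)} where
  toFun lam :=
    ⟨((fun i => if i < m then lam.1 i else 0), fun j => if j < n then pconj k lam.1 j - m else 0),
      exists_partitions_of_hook hm lam.2.1 lam.2.2⟩
  invFun p :=
    ⟨stack m p.1.1 (pconj k p.1.2), by
      obtain ⟨s, t, hst, hμ, hν, hlμ, hlν, hjoin⟩ := p.2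
      exact stack_pconj_isPartitionOf_and_le hst hμ hν hlμ hlν hjoin⟩
  left_inv := by
    rintro ⟨f, hp, hook⟩
    refine Subtype.ext ?_
    dsimp only
    rw [ite_pconj_sub_eq_pconj_shift hp hook,
      pconj_pconj (antitone_shift hp.1 m) (shift_eq_zero hp.2.1 m) (hp.apply_le m)]
    exact stack_truncate_shift f
  right_inv := by
    rintro ⟨⟨μ, ν⟩, s, t, hst, hμ, hν, hlμ, hlν, hjoin⟩
    have hνk := hν.eq_zero_of_le (show t ≤ k by omega)
    obtain ⟨hpart, hook⟩ := stack_pconj_isPartitionOf_and_le hst hμ hν hlμ hlν hjoin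
    refine Subtype.ext (Prod.ext ?_ ?_)
    · exact truncate_stack (eq_zero_of_plen_le hμ.1 (hμ.eq_zero_of_le (show s ≤ k by omega)) hlμ)
    · dsimp only
      rw [ite_pconj_sub_eq_pconj_shift hpart hook, stack_shift,
        pconj_pconj hν.1 hνk ((hν.apply_le 0).trans (by omega))]

theorem hook_partition_bijection_general (m n k : ℕ) (hm : 0 < m) :
    ∃ e : {f : ℕ → ℕ // IsPartitionOf f k ∧ f m ≤ n} →
        {p : (ℕ → ℕ) × (ℕ → ℕ) // ∃ s t : ℕ, s + t = k ∧
          IsPartitionOf p.1 s ∧ IsPartitionOf p.2 t ∧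
          plen k p.1 ≤ m ∧ plen k p.2 ≤ n ∧ plen k p.2 ≤ p.1 (m - 1)},
      Function.Bijective e ∧
      ∀ lam : {f : ℕ → ℕ // IsPartitionOf f k ∧ f m ≤ n},
        (e lam).val =
          ((fun i => if i < m then lam.val i else 0),
           (fun j => if j < n then pconj k lam.val j - m else 0)) :=
  ⟨hookSplit m n k hm, (hookSplit m n k hm).bijective, fun _ => rfl⟩

/-- There is a bijection between the set `H(m,n;k)` of `(m,n)` hook-shape partitions
of `k` (those with `λ_{m+1} ≤ n`) and the set of pairs `(μ, ν)` of partitions with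
`μ ⊢ s`, `ν ⊢ t`, `s + t = k`, `ℓ(μ) ≤ m`, `ℓ(ν) ≤ n`, and `μ_m ≥ ℓ(ν)`; it sends
`λ` to `(λ¹, λ²)` where `λ¹ = (λ_1, …, λ_m)` and `λ²_j = max(λ*_j − m, 0)` for
`j = 1, …, n`. -/
theorem hook_partition_bijection (m n k : ℕ) (hm : 0 < m) (hn : 0 < n) :
    ∃ e : {f : ℕ → ℕ // IsPartitionOf f k ∧ f m ≤ n} →
        {p : (ℕ → ℕ) × (ℕ → ℕ) // ∃ s t : ℕ, s + t = k ∧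
          IsPartitionOf p.1 s ∧ IsPartitionOf p.2 t ∧
          plen k p.1 ≤ m ∧ plen k p.2 ≤ n ∧ plen k p.2 ≤ p.1 (m - 1)},
      Function.Bijective e ∧
      ∀ lam : {f : ℕ → ℕ // IsPartitionOf f k ∧ f m ≤ n},
        (e lam).val =
          ((fun i => if i < m then lam.val i else 0),
           (fun j => if j < n then pconj k lam.val j - m else 0)) :=
  hook_partition_bijection_general m n k hm
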